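/- arXiv:1511.08061 — 3 statements merged into one kernel-verified Lean document; each statement's English description precedes it below -/
import Mathlib

section
/- For any m ≤ n, the (n+1)-coloured rationals with the colouring obtained by merging colour n into colour m (i.e. recolouring every point of colour n by colour m) is isomorphic as an n-coloured order to the n-coloured rationals. Consequently ℚ_{n+1}(L₀,...,L_{n-1}, L_m) ≅ ℚ_n(L₀,...,L_{n-1}) for any m < n. -/
/-- `Q` together with the colouring `c : Q → Fin n` is a copy of the `n`-coloured
rationals `ℚ_n`: a countable nonempty dense linear order without endpoints in which
each of the `n` colours occurs interdensely. -/
def IsQn (n : ℕ) (Q : Type*) [LinearOrder Q] (c : Q → Fin n) : Prop :=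
  Countable Q ∧ Nonempty Q ∧ DenselyOrdered Q ∧ NoMinOrder Q ∧ NoMaxOrder Q ∧
    ∀ x y : Q, x < y → ∀ i : Fin n, ∃ z : Q, x < z ∧ z < y ∧ c z = i

/-! Merging colour `n` into colour `m` keeps every colour of `Fin n` interdense, so `Q` with
the merged colouring is again a copy of `ℚ_n`, and the coloured form of Cantor's back-and-forth
argument gives a colour-preserving isomorphism `e : Q ≃o Q'`. Since corresponding points carry
the same colour, and hence the same fibre, reindexing the lexicographic sum along `e` is an
isomorphism of the shuffles. -/

section Colouring

variable {ι α β : Type*}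

def IsInterdenseColouring [LT α] (c : α → ι) : Prop :=
  ∀ x y : α, x < y → ∀ i : ι, ∃ z : α, x < z ∧ z < y ∧ c z = i

theorem IsInterdenseColouring.comp_of_surjective [LT α] {κ : Type*} {c : α → ι}
    (hc : IsInterdenseColouring c) {g : ι → κ} (hg : g.Surjective) :
    IsInterdenseColouring (g ∘ c) := by
  intro x y hxy k
  obtain ⟨i, rfl⟩ := hg k
  obtain ⟨z, hxz, hzy, hz⟩ := hc x y hxy i
  exact ⟨z, hxz, hzy, congrArg g hz⟩

theorem IsInterdenseColouring.exists_between_finsets [LinearOrder β] [NoMinOrder β] [NoMaxOrder β]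
    [DenselyOrdered β] [Nonempty β] {c : β → ι} (hc : IsInterdenseColouring c)
    (lo hi : Finset β) (lo_lt_hi : ∀ x ∈ lo, ∀ y ∈ hi, x < y) (i : ι) :
    ∃ z : β, (∀ x ∈ lo, x < z) ∧ (∀ y ∈ hi, z < y) ∧ c z = i := by
  obtain ⟨u, hlo_u, hu_hi⟩ := Order.exists_between_finsets lo hi lo_lt_hi
  obtain ⟨v, hlo_v, hv_hi⟩ := Order.exists_between_finsets (insert u lo) hi <| by
    simpa only [Finset.forall_mem_insert] using ⟨hu_hi, lo_lt_hi⟩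
  obtain ⟨z, huz, hzv, hz⟩ := hc u v (hlo_v u (Finset.mem_insert_self u lo)) i
  exact ⟨z, fun x hx => (hlo_u x hx).trans huz, fun y hy => hzv.trans (hv_hi y hy), hz⟩

end Colouring

noncomputable section

namespace Order

variable {ι α β : Type*} [LinearOrder α] [LinearOrder β]

def ColouredPartialIso (cα : α → ι) (cβ : β → ι) : Type _ :=
  { f : PartialIso α β // ∀ p ∈ f.val, cβ p.2 = cα p.1 }

namespace ColouredPartialIso

variable {cα : α → ι} {cβ : β → ι}

instance : Preorder (ColouredPartialIso cα cβ) := Subtype.preorder _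

instance : Inhabited (ColouredPartialIso cα cβ) :=
  ⟨⟨default, fun _ h => (Finset.notMem_empty _ h).elim⟩⟩

protected def comm (f : ColouredPartialIso cα cβ) : ColouredPartialIso cβ cα :=
  ⟨f.1.comm, fun p hp => by
    obtain ⟨q, hq, rfl⟩ := Finset.mem_image.1 hp
    exact (f.2 q hq).symm⟩

theorem exists_across [NoMinOrder β] [NoMaxOrder β] [DenselyOrdered β] [Nonempty β]
    (hβ : IsInterdenseColouring cβ) (f : ColouredPartialIso cα cβ) (a : α) :
    ∃ b : β, (∀ p ∈ f.1.val, cmp p.1 a = cmp p.2 b) ∧ cβ b = cα a := by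
  by_cases h : ∃ b, (a, b) ∈ f.1.val
  · obtain ⟨b, hb⟩ := h
    exact ⟨b, fun p hp => f.1.prop _ hp _ hb, f.2 _ hb⟩
  have lo_lt_hi : ∀ x ∈ {p ∈ f.1.val | p.1 < a}.image Prod.snd,
      ∀ y ∈ {p ∈ f.1.val | a < p.1}.image Prod.snd, x < y := by
    simp only [Finset.mem_image, Finset.mem_filter]
    rintro _ ⟨p, ⟨hp, hpa⟩, rfl⟩ _ ⟨q, ⟨hq, haq⟩, rfl⟩
    rw [← lt_iff_lt_of_cmp_eq_cmp (f.1.prop _ hp _ hq)]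
    exact hpa.trans haq
  obtain ⟨b, hlo, hhi, hb⟩ := hβ.exists_between_finsets _ _ lo_lt_hi (cα a)
  refine ⟨b, fun p hp => ?_, hb⟩
  rcases lt_or_gt_of_ne fun hpa : p.1 = a => h ⟨p.2, hpa ▸ hp⟩ with hpa | hap
  · have hpb := hlo _ (Finset.mem_image_of_mem _ (Finset.mem_filter.2 ⟨hp, hpa⟩))
    rw [(cmp_eq_lt_iff _ _).2 hpa, (cmp_eq_lt_iff _ _).2 hpb]
  · have hbp := hhi _ (Finset.mem_image_of_mem _ (Finset.mem_filter.2 ⟨hp, hap⟩))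
    rw [(cmp_eq_gt_iff _ _).2 hap, (cmp_eq_gt_iff _ _).2 hbp]

variable (cα) in
def definedAtLeft [NoMinOrder β] [NoMaxOrder β] [DenselyOrdered β] [Nonempty β]
    (hβ : IsInterdenseColouring cβ) (a : α) : Cofinal (ColouredPartialIso cα cβ) where
  carrier := {f | ∃ b, (a, b) ∈ f.1.val}
  isCofinal f := by
    obtain ⟨b, hcmp, hb⟩ := exists_across hβ f a
    refine ⟨⟨⟨insert (a, b) f.1.val, ?_⟩, ?_⟩, ⟨b, Finset.mem_insert_self _ _⟩,
      Finset.subset_insert _ _⟩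
    · simp only [Finset.forall_mem_insert, cmp_self_eq_eq, true_and]
      exact ⟨fun q hq => cmp_eq_cmp_symm.1 (hcmp q hq), fun p hp => ⟨hcmp p hp, f.1.prop p hp⟩⟩
    · simpa only [Finset.forall_mem_insert] using ⟨hb, f.2⟩

variable (cβ) in
def definedAtRight [NoMinOrder α] [NoMaxOrder α] [DenselyOrdered α] [Nonempty α]
    (hα : IsInterdenseColouring cα) (b : β) : Cofinal (ColouredPartialIso cα cβ) where
  carrier := {f | ∃ a, (a, b) ∈ f.1.val}
  isCofinal f := by
    obtain ⟨f', ⟨a, ha⟩, hff'⟩ := (definedAtLeft cβ hα b).isCofinal f.comm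
    refine ⟨f'.comm, ⟨a, Finset.mem_image_of_mem _ ha⟩, fun p hp => ?_⟩
    exact Finset.mem_image.2 ⟨p.swap, hff' (Finset.mem_image_of_mem _ hp), rfl⟩

end ColouredPartialIso

open ColouredPartialIso in
theorem exists_orderIso_of_isInterdenseColouring [Countable α] [DenselyOrdered α] [NoMinOrder α]
    [NoMaxOrder α] [Nonempty α] [Countable β] [DenselyOrdered β] [NoMinOrder β] [NoMaxOrder β]
    [Nonempty β] {cα : α → ι} {cβ : β → ι} (hα : IsInterdenseColouring cα)
    (hβ : IsInterdenseColouring cβ) :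
    ∃ e : α ≃o β, ∀ x, cβ (e x) = cα x := by
  cases nonempty_encodable (α ⊕ β)
  let D : α ⊕ β → Cofinal (ColouredPartialIso cα cβ) :=
    Sum.elim (definedAtLeft cα hβ) (definedAtRight cβ hα)
  let I := idealOfCofinals default D
  have exists_image (a : α) : ∃ b, ∃ f ∈ I, (a, b) ∈ f.1.val := by
    obtain ⟨f, ⟨b, hb⟩, hf⟩ := cofinal_meets_idealOfCofinals default D (Sum.inl a)
    exact ⟨b, f, hf, hb⟩
  have exists_preimage (b : β) : ∃ a, ∃ f ∈ I, (a, b) ∈ f.1.val := by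
    obtain ⟨f, ⟨a, ha⟩, hf⟩ := cofinal_meets_idealOfCofinals default D (Sum.inr b)
    exact ⟨a, f, hf, ha⟩
  choose F hF using exists_image
  choose G hG using exists_preimage
  refine ⟨OrderIso.ofCmpEqCmp F G fun a b => ?_, fun a => ?_⟩
  · obtain ⟨f, hf, ha⟩ := hF a
    obtain ⟨g, hg, hb⟩ := hG b
    obtain ⟨h, -, hfh, hgh⟩ := I.directed _ hf _ hg
    exact h.1.prop _ (hfh ha) _ (hgh hb)
  · obtain ⟨f, -, ha⟩ := hF a
    exact f.2 _ ha

end Order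

end

def OrderIso.sigmaLexCongrLeft {ι κ : Type*} [Preorder ι] [Preorder κ] {β : κ → Type*}
    [∀ j, LE (β j)] (e : ι ≃o κ) : (Σₗ i, β (e i)) ≃o Σₗ j, β j where
  toEquiv := Equiv.sigmaCongrLeft e.toEquiv
  map_rel_iff' := by
    rintro ⟨i, x⟩ ⟨i', y⟩
    change Sigma.Lex (· < ·) (fun _ => (· ≤ ·)) (⟨e i, x⟩ : Σ j, β j) ⟨e i', y⟩ ↔
      Sigma.Lex (· < ·) (fun i => (· ≤ · : β (e i) → _ → _)) ⟨i, x⟩ ⟨i', y⟩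
    simp only [Sigma.lex_iff]
    refine or_congr e.lt_iff_lt ⟨fun ⟨h, hle⟩ => ?_, fun ⟨h, hle⟩ => ?_⟩
    · obtain rfl := e.injective h; exact ⟨rfl, hle⟩
    · subst h; exact ⟨rfl, hle⟩

theorem nonempty_sigmaLex_orderIso_of_comp_eq {ι κ γ : Type*} [Preorder ι] [Preorder κ]
    (L : γ → Type*) [∀ k, LE (L k)] {d : ι → γ} {d' : κ → γ} (e : ι ≃o κ)
    (he : ∀ i, d' (e i) = d i) :
    Nonempty ((Σₗ i, L (d i)) ≃o Σₗ j, L (d' j)) := by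
  obtain rfl : d = d' ∘ e := funext fun i => (he i).symm
  exact ⟨e.sigmaLexCongrLeft (β := fun j => L (d' j))⟩

section IsQn

variable {n k : ℕ} {α β : Type*} [LinearOrder α] [LinearOrder β]

theorem IsQn.comp_of_surjective {c : α → Fin n} (hc : IsQn n α c) {g : Fin n → Fin k}
    (hg : g.Surjective) : IsQn k α (g ∘ c) :=
  let ⟨hcount, hne, hdense, hmin, hmax, hinter⟩ := hc
  ⟨hcount, hne, hdense, hmin, hmax, IsInterdenseColouring.comp_of_surjective hinter hg⟩

theorem IsQn.exists_orderIso {cα : α → Fin n} {cβ : β → Fin n} (hα : IsQn n α cα)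
    (hβ : IsQn n β cβ) : ∃ e : α ≃o β, ∀ x, cβ (e x) = cα x := by
  obtain ⟨_, _, _, _, _, hcα⟩ := hα
  obtain ⟨_, _, _, _, _, hcβ⟩ := hβ
  exact Order.exists_orderIso_of_isInterdenseColouring hcα hcβ

end IsQn

/-- Merging colour n into colour m in ℚ_{n+1} yields a copy of ℚ_n, and
consequently ℚ_{n+1}(L₀,...,L_{n-1},L_m) ≅ ℚ_n(L₀,...,L_{n-1}). -/
theorem Qn_merge (n : ℕ) (m : Fin n) (Q Q' : Type*) [LinearOrder Q] [LinearOrder Q']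
    (c : Q → Fin (n + 1)) (c' : Q' → Fin n)
    (hQ : IsQn (n + 1) Q c) (hQ' : IsQn n Q' c')
    (merge : Fin (n + 1) → Fin n)
    (hmerge : ∀ i : Fin (n + 1), merge i = if h : (i : ℕ) < n then ⟨i, h⟩ else m)
    (L : Fin n → Type*) [∀ i, LinearOrder (L i)] :
    (∃ e : Q ≃o Q', ∀ x : Q, c' (e x) = merge (c x)) ∧
      Nonempty ((Σₗ q : Q, L (merge (c q))) ≃o (Σₗ q' : Q', L (c' q'))) := by
  have merge_surjective : merge.Surjective := fun i => ⟨i.castSucc, by simp [hmerge]⟩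
  obtain ⟨e, he⟩ := (hQ.comp_of_surjective merge_surjective).exists_orderIso hQ'
  exact ⟨⟨e, he⟩, nonempty_sigmaLex_orderIso_of_comp_eq L e he⟩
end

section
/- A shuffle ℚ_n(L₀,...,L_{n-1}) of nonempty linear orders is a dense linear order if and only if every L_i is dense in itself or a singleton and the resulting order has no two consecutive elements; in particular, if each L_i is a singleton then the shuffle is a countable dense linear order without endpoints. -/
/-- A shuffle of nonempty linear orders is a dense order iff each shuffled order is
dense in itself or a singleton and the shuffle has no two consecutive elements; in
particular, if each L_i is a singleton then the shuffle is a countable dense linear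
order without endpoints. -/
theorem shuffle_dense_iff (n : ℕ) (Q : Type*) [LinearOrder Q] (c : Q → Fin n)
    (hQ : IsQn n Q c) (L : Fin n → Type*) [∀ i, LinearOrder (L i)]
    [∀ i, Nonempty (L i)] :
    (DenselyOrdered (Σₗ q : Q, L (c q)) ↔
      ((∀ i, DenselyOrdered (L i) ∨ Subsingleton (L i)) ∧
        ¬∃ x y : (Σₗ q : Q, L (c q)), x ⋖ y)) ∧
    ((∀ i, Subsingleton (L i)) →
      Countable (Σₗ q : Q, L (c q)) ∧ DenselyOrdered (Σₗ q : Q, L (c q)) ∧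
        NoMinOrder (Σₗ q : Q, L (c q)) ∧ NoMaxOrder (Σₗ q : Q, L (c q))) := by
  obtain ⟨hcount, hne, hdense, hmin, hmax, hcol⟩ := hQ
  have hdense2 : (∀ i, Subsingleton (L i)) → DenselyOrdered (Σₗ q : Q, L (c q)) := by
    intro hs
    constructor
    rintro ⟨q₁, a₁⟩ ⟨q₂, a₂⟩ h
    rcases Sigma.Lex.lt_def.mp h with hq | ⟨e, ha⟩
    · obtain ⟨r, hr1, hr2⟩ := exists_between hq
      obtain ⟨w⟩ := (inferInstance : Nonempty (L (c r)))
      exact ⟨toLex ⟨r, w⟩, Sigma.Lex.left _ _ hr1, Sigma.Lex.left _ _ hr2⟩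
    · dsimp only at e
      subst e
      exact absurd (Subsingleton.elim _ a₂) ha.ne
  constructor
  · constructor
    · intro hD
      refine ⟨fun i => ?_, fun ⟨x, y, hxy⟩ => not_covBy hxy⟩
      by_cases hs : Subsingleton (L i)
      · exact Or.inr hs
      refine Or.inl ⟨fun a b hab => ?_⟩
      obtain ⟨x⟩ := hne
      obtain ⟨y, hy⟩ := hmax.exists_gt x
      obtain ⟨q, -, -, hq⟩ := hcol x y hy i
      subst hq
      obtain ⟨z, hz1, hz2⟩ := hD.dense (toLex ⟨q, a⟩) (toLex ⟨q, b⟩)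
        (Sigma.Lex.right _ _ hab)
      obtain ⟨r, w⟩ := z
      rcases Sigma.Lex.lt_def.mp hz1 with h1 | ⟨e1, h1⟩ <;>
        rcases Sigma.Lex.lt_def.mp hz2 with h2 | ⟨e2, h2⟩
      · exact absurd (h1.trans h2) (lt_irrefl q)
      · exact absurd (show r = q from e2) (show r ≠ q from h1.ne')
      · exact absurd (show q = r from e1) (show q ≠ r from h2.ne')
      · dsimp only at e1
        subst e1
        exact ⟨w, h1, h2⟩
    · rintro ⟨hLs, hnocov⟩
      exact denselyOrdered_iff_forall_not_covBy.mpr fun a b hab => hnocov ⟨a, b, hab⟩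
  · intro hs
    refine ⟨?_, hdense2 hs, ?_, ?_⟩
    · exact inferInstanceAs (Countable (Σ q : Q, L (c q)))
    · constructor
      rintro ⟨q, a⟩
      obtain ⟨q', hq'⟩ := hmin.exists_lt q
      obtain ⟨w⟩ := (inferInstance : Nonempty (L (c q')))
      exact ⟨toLex ⟨q', w⟩, Sigma.Lex.left _ _ hq'⟩
    · constructor
      rintro ⟨q, a⟩
      obtain ⟨q', hq'⟩ := hmax.exists_gt q
      obtain ⟨w⟩ := (inferInstance : Nonempty (L (c q')))
      exact ⟨toLex ⟨q', w⟩, Sigma.Lex.left _ _ hq'⟩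
end

section
/- Let T = ℚ_n(t₀,...,t_{n-1}) be a shuffle of finite nonempty linear orders in which the t_i's have all elements consecutive (each copy of t_i is a maximal finite convex subset of L_T). Then the copies of the t_i in L_T are exactly the maximal finite convex subsets of L_T, and hence any order isomorphism between two such shuffles ℚ_n(t₀,...,t_{n-1}) and ℚ_m(s₀,...,s_{m-1}) of finite orders maps each copy of some t_i onto a copy of some s_j with |t_i| = |s_j|. -/
/-- `S` is a maximal finite convex subset of the linear order `α`. -/
def MaxFinConvex {α : Type*} [LinearOrder α] (S : Set α) : Prop :=
  S.OrdConnected ∧ S.Finite ∧ S.Nonempty ∧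
    ∀ S' : Set α, S ⊆ S' → S'.OrdConnected → S'.Finite → S' ⊆ S

open Set

section Aux

variable {I : Type*} [LinearOrder I] {f : I → Type*} [∀ i, LinearOrder (f i)]

/-- The fiber over `i` as a set in the lex sigma type. -/
lemma range_toLex_eq (i : I) :
    (Set.range fun y : f i => (toLex ⟨i, y⟩ : Σₗ i, f i)) =
      {x : Σₗ i, f i | (ofLex x).1 = i} := by
  ext x
  constructor
  · rintro ⟨y, rfl⟩; rfl
  · intro hx
    obtain ⟨j, y⟩ := x
    cases hx
    exact ⟨y, rfl⟩

lemma fst_mono {a b : Σₗ i, f i} (h : a ≤ b) : (ofLex a).1 ≤ (ofLex b).1 := by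
  rcases Sigma.Lex.le_def.1 h with h | ⟨h, -⟩
  · exact le_of_lt h
  · exact le_of_eq h

lemma fiber_ordConnected (i : I) :
    ({x : Σₗ i, f i | (ofLex x).1 = i}).OrdConnected := by
  constructor
  rintro a ha b hb x ⟨hx1, hx2⟩
  exact le_antisymm (hb ▸ fst_mono hx2) (ha ▸ fst_mono hx1)

lemma eq_fst_of_mem [DenselyOrdered I] [∀ i, Nonempty (f i)]
    {S : Set (Σₗ i, f i)} (hc : S.OrdConnected) (hf : S.Finite)
    {x y : Σₗ i, f i} (hx : x ∈ S) (hy : y ∈ S) : (ofLex x).1 = (ofLex y).1 := by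
  by_contra hne
  wlog hlt : (ofLex x).1 < (ofLex y).1 generalizing x y
  · exact this hy hx (Ne.symm hne) (lt_of_le_of_ne (not_lt.1 hlt) (Ne.symm hne))
  have hIoo : (Set.Ioo (ofLex x).1 (ofLex y).1).Infinite := Set.Ioo_infinite hlt
  have hinj : Function.Injective
      (fun k : I => (toLex ⟨k, Classical.arbitrary (f k)⟩ : Σₗ i, f i)) := by
    intro a b hab
    exact congrArg (fun z : Σₗ i, f i => (ofLex z).1) hab
  have hsub : (fun k : I => (toLex ⟨k, Classical.arbitrary (f k)⟩ : Σₗ i, f i)) ''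
      (Set.Ioo (ofLex x).1 (ofLex y).1) ⊆ S := by
    rintro - ⟨k, ⟨hk1, hk2⟩, rfl⟩
    exact hc.out hx hy ⟨Sigma.Lex.le_def.2 (Or.inl hk1), Sigma.Lex.le_def.2 (Or.inl hk2)⟩
  exact (hIoo.image (hinj.injOn)) (hf.subset hsub)

lemma maxFinConvex_iff_fiber [DenselyOrdered I] [∀ i, Nonempty (f i)] [∀ i, Finite (f i)]
    (S : Set (Σₗ i, f i)) :
    MaxFinConvex S ↔ ∃ i : I, S = {x : Σₗ i, f i | (ofLex x).1 = i} := by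
  have fib_fin : ∀ i : I, ({x : Σₗ i, f i | (ofLex x).1 = i}).Finite := by
    intro i
    rw [← range_toLex_eq]
    exact Set.finite_range _
  have fib_max : ∀ i : I, MaxFinConvex {x : Σₗ i, f i | (ofLex x).1 = i} := by
    intro i
    refine ⟨fiber_ordConnected i, fib_fin i, ⟨toLex ⟨i, Classical.arbitrary (f i)⟩, rfl⟩, ?_⟩
    intro S' hsub hc hf x hx
    have hm : (toLex ⟨i, Classical.arbitrary (f i)⟩ : Σₗ i, f i) ∈
        {x : Σₗ i, f i | (ofLex x).1 = i} := rfl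
    exact eq_fst_of_mem hc hf hx (hsub hm)
  constructor
  · rintro ⟨hc, hf, ⟨x, hx⟩, hmax⟩
    refine ⟨(ofLex x).1, Set.Subset.antisymm ?_ ?_⟩
    · intro y hy
      exact eq_fst_of_mem hc hf hy hx
    · exact hmax _ (fun y hy => eq_fst_of_mem hc hf hy hx)
        (fiber_ordConnected _) (fib_fin _)
  · rintro ⟨i, rfl⟩
    exact fib_max i

lemma maxFinConvex_image {α β : Type*} [LinearOrder α] [LinearOrder β] (φ : α ≃o β)
    {S : Set α} (h : MaxFinConvex S) : MaxFinConvex (φ '' S) := by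
  obtain ⟨hc, hf, hne, hmax⟩ := h
  have himg : ∀ {T : Set α}, T.OrdConnected → (φ '' T).OrdConnected := by
    intro T hT
    constructor
    rintro - ⟨a, ha, rfl⟩ - ⟨b, hb, rfl⟩ x ⟨hx1, hx2⟩
    refine ⟨φ.symm x, hT.out ha hb ⟨?_, ?_⟩, φ.apply_symm_apply x⟩
    · exact (φ.le_iff_le).1 (by simpa using hx1)
    · exact (φ.le_iff_le).1 (by simpa using hx2)
  refine ⟨himg hc, hf.image _, hne.image _, ?_⟩
  intro S' hsub hc' hf'
  have h1 : S ⊆ φ.symm '' S' := by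
    intro x hx
    exact ⟨φ x, hsub ⟨x, hx, rfl⟩, φ.symm_apply_apply x⟩
  have h2 : φ.symm '' S' ⊆ S := by
    have : ∀ {T : Set β}, T.OrdConnected → (φ.symm '' T).OrdConnected := by
      intro T hT
      constructor
      rintro - ⟨a, ha, rfl⟩ - ⟨b, hb, rfl⟩ x ⟨hx1, hx2⟩
      refine ⟨φ x, hT.out ha hb ⟨?_, ?_⟩, φ.symm_apply_apply x⟩
      · exact (φ.symm.le_iff_le).1 (by simpa using hx1)
      · exact (φ.symm.le_iff_le).1 (by simpa using hx2)
    exact hmax _ h1 (this hc') (hf'.image _)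
  intro y hy
  obtain ⟨x, hx, rfl⟩ : ∃ x ∈ φ.symm '' S', φ x = y :=
    ⟨φ.symm y, ⟨y, hy, rfl⟩, φ.apply_symm_apply y⟩
  exact ⟨x, h2 hx, rfl⟩

end Aux


/-- In a shuffle of finite nonempty linear orders, the copies of the shuffled orders
are exactly the maximal finite convex subsets; hence any order isomorphism between
two such shuffles maps each copy of some t_i onto a copy of some s_j of the same
size. -/
theorem shuffle_copies_maxFinConvex (n m : ℕ) (Q Q' : Type*) [LinearOrder Q]
    [LinearOrder Q'] (c : Q → Fin n) (c' : Q' → Fin m)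
    (hQ : IsQn n Q c) (hQ' : IsQn m Q' c')
    (t : Fin n → Type*) [∀ i, LinearOrder (t i)] [∀ i, Finite (t i)]
    [∀ i, Nonempty (t i)]
    (s : Fin m → Type*) [∀ j, LinearOrder (s j)] [∀ j, Finite (s j)]
    [∀ j, Nonempty (s j)] :
    (∀ S : Set (Σₗ q : Q, t (c q)), MaxFinConvex S ↔
      ∃ q : Q, S = Set.range fun y : t (c q) => (toLex ⟨q, y⟩ : Σₗ q : Q, t (c q))) ∧
    (∀ φ : (Σₗ q : Q, t (c q)) ≃o (Σₗ q' : Q', s (c' q')), ∀ q : Q, ∃ q' : Q',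
      φ '' (Set.range fun y : t (c q) => (toLex ⟨q, y⟩ : Σₗ q : Q, t (c q))) =
        (Set.range fun z : s (c' q') => (toLex ⟨q', z⟩ : Σₗ q' : Q', s (c' q'))) ∧
      Nat.card (t (c q)) = Nat.card (s (c' q'))) := by
  obtain ⟨-, -, hQd, -, -, -⟩ := hQ
  obtain ⟨-, -, hQ'd, -, -, -⟩ := hQ'
  haveI := hQd
  haveI := hQ'd
  have part1 : ∀ S : Set (Σₗ q : Q, t (c q)), MaxFinConvex S ↔
      ∃ q : Q, S = Set.range fun y : t (c q) => (toLex ⟨q, y⟩ : Σₗ q : Q, t (c q)) := by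
    intro S
    rw [maxFinConvex_iff_fiber (f := fun q => t (c q)) S]
    exact exists_congr fun q => by rw [range_toLex_eq (f := fun q => t (c q)) q]
  have part1' : ∀ S : Set (Σₗ q' : Q', s (c' q')), MaxFinConvex S ↔
      ∃ q' : Q', S = Set.range fun z : s (c' q') => (toLex ⟨q', z⟩ : Σₗ q' : Q', s (c' q')) := by
    intro S
    rw [maxFinConvex_iff_fiber (f := fun q' => s (c' q')) S]
    exact exists_congr fun q' => by rw [range_toLex_eq (f := fun q' => s (c' q')) q']
  refine ⟨part1, ?_⟩
  intro φ q
  have h1 : MaxFinConvex (Set.range fun y : t (c q) => (toLex ⟨q, y⟩ : Σₗ q : Q, t (c q))) :=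
    (part1 _).2 ⟨q, rfl⟩
  obtain ⟨q', hq'⟩ := (part1' _).1 (maxFinConvex_image φ h1)
  refine ⟨q', hq', ?_⟩
  have hinj : Function.Injective (fun y : t (c q) => (toLex ⟨q, y⟩ : Σₗ q : Q, t (c q))) :=
    toLex.injective.comp sigma_mk_injective
  have hinj' : Function.Injective
      (fun z : s (c' q') => (toLex ⟨q', z⟩ : Σₗ q' : Q', s (c' q'))) :=
    toLex.injective.comp sigma_mk_injective
  calc Nat.card (t (c q))
      = Nat.card (Set.range fun y : t (c q) => (toLex ⟨q, y⟩ : Σₗ q : Q, t (c q))) :=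
        Nat.card_congr (Equiv.ofInjective _ hinj)
    _ = Nat.card (φ '' (Set.range fun y : t (c q) =>
          (toLex ⟨q, y⟩ : Σₗ q : Q, t (c q)))) :=
        Nat.card_congr (Equiv.Set.image φ _ φ.injective)
    _ = Nat.card (Set.range fun z : s (c' q') =>
          (toLex ⟨q', z⟩ : Σₗ q' : Q', s (c' q'))) := by rw [hq']
    _ = Nat.card (s (c' q')) := (Nat.card_congr (Equiv.ofInjective _ hinj')).symm
end
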